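/- Let α : ℝ → ℝ be given by α(t) = t + 1, and let w be a continuous bounded positive function on ℝ for which there exist constants M, δ, K₁, K₂ > 0 with M − δ > 1 such that 1/M ≤ w(t) ≤ 1/(M−δ) for all t ≤ −K₁ and w(t) = 1 for all t ≥ K₂. Then the inverse S̃_{α,w} of the weighted composition operator T̃_{α,w}(f) = w·(f∘α) on C₀(ℝ), given by S̃_{α,w}(f) = (w∘α⁻¹)⁻¹·(f∘α⁻¹), is topologically Cesàro hyper-transitive on C₀(ℝ). -/
import Mathlib


open scoped ZeroAtInfty

open Filter Finset Topology

/-- A bounded linear operator `T` on a complex normed space is *topologically Cesàro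
hyper-transitive* if for every pair of nonempty open subsets `O₁, O₂` there exists a
strictly increasing sequence `(n_k)` of (positive) natural numbers such that
`n_k⁻¹ • T^{n_k}(O₁) ∩ O₂ ≠ ∅` for all `k`. -/
def IsCesaroHyperTransitive {E : Type*} [NormedAddCommGroup E] [NormedSpace ℂ E]
    (T : E →L[ℂ] E) : Prop :=
  ∀ O₁ O₂ : Set E, IsOpen O₁ → IsOpen O₂ → O₁.Nonempty → O₂.Nonempty →
    ∃ n : ℕ → ℕ, StrictMono n ∧ (∀ k, 1 ≤ n k) ∧
      ∀ k, ∃ f ∈ O₁, ((n k : ℂ))⁻¹ • (T ^ n k) f ∈ O₂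

lemma c0_norm_le (f : C₀(ℝ, ℂ)) {a : ℝ} (ha : 0 ≤ a) (h : ∀ t, ‖f t‖ ≤ a) : ‖f‖ ≤ a := by
  rw [← ZeroAtInftyContinuousMap.norm_toBCF_eq_norm]
  exact (BoundedContinuousFunction.norm_le ha).mpr h

lemma c0_norm_apply_le (f : C₀(ℝ, ℂ)) (t : ℝ) : ‖f t‖ ≤ ‖f‖ := by
  rw [← ZeroAtInftyContinuousMap.norm_toBCF_eq_norm]
  exact f.toBCF.norm_coe_le_norm t

/-- Truncation: every `C₀` function is approximated by ones vanishing outside a ball. -/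
lemma exists_truncation (g : C₀(ℝ, ℂ)) {ε : ℝ} (hε : 0 < ε) :
    ∃ R > (0:ℝ), ∃ g' : C₀(ℝ, ℂ), ‖g - g'‖ ≤ ε ∧ ∀ t : ℝ, R ≤ |t| → g' t = 0 := by
  have hco : g ⁻¹' Metric.closedBall 0 ε ∈ cocompact ℝ :=
    (zero_at_infty g) (Metric.closedBall_mem_nhds 0 hε)
  obtain ⟨K, hK, hKsub⟩ := Filter.mem_cocompact.mp hco
  obtain ⟨r, hr⟩ := hK.isBounded.subset_closedBall 0
  set R₀ : ℝ := max r 0 with hR₀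
  have hsmall : ∀ t : ℝ, R₀ < |t| → ‖g t‖ ≤ ε := by
    intro t ht
    have htK : t ∉ K := by
      intro htK
      have := hr htK
      rw [Metric.mem_closedBall, Real.dist_eq, sub_zero] at this
      have : |t| ≤ R₀ := le_trans this (le_max_left _ _)
      linarith
    have := hKsub htK
    simpa [Metric.mem_closedBall, dist_zero_right] using this
  set R : ℝ := R₀ + 1 with hR
  set χ : ℝ → ℝ := fun t => max 0 (min 1 (R - |t|)) with hχ
  have hχdef : ∀ t, χ t = max 0 (min 1 (R - |t|)) := fun _ => rfl
  have hχ0 : ∀ t, 0 ≤ χ t := fun t => le_max_left _ _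
  have hχ1 : ∀ t, χ t ≤ 1 := fun t => max_le zero_le_one (min_le_left _ _)
  have hχcont : Continuous χ := by
    apply continuous_const.max
    exact continuous_const.min (continuous_const.sub continuous_abs)
  set g' : C₀(ℝ, ℂ) := ZeroAtInftyContinuousMap.mk
    ⟨fun t => (χ t : ℂ) * g t, by
      exact (Complex.continuous_ofReal.comp hχcont).mul (map_continuous g)⟩
    (by
      refine squeeze_zero_norm (a := fun t => ‖g t‖) ?_ ?_
      · intro t
        simp only [ContinuousMap.coe_mk, norm_mul, Complex.norm_real, Real.norm_eq_abs]
        calc |χ t| * ‖g t‖ ≤ 1 * ‖g t‖ := by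
              apply mul_le_mul_of_nonneg_right _ (norm_nonneg _)
              rw [abs_of_nonneg (hχ0 t)]; exact hχ1 t
          _ = ‖g t‖ := one_mul _
      · simpa using (zero_at_infty g (α := ℝ)).norm) with hg'
  have hg'app : ∀ t, g' t = (χ t : ℂ) * g t := fun t => rfl
  refine ⟨R, by positivity, g', ?_, ?_⟩
  · apply c0_norm_le _ hε.le
    intro t
    have happ : (g - g') t = g t - g' t := rfl
    rw [happ, hg'app]
    rcases le_or_gt (|t|) R₀ with h | h
    · have hχt : χ t = 1 := by
        have h1 : (1:ℝ) ≤ R - |t| := by rw [hR]; linarith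
        rw [hχdef, min_eq_left h1, max_eq_right zero_le_one]
      rw [hχt]
      simp [hε.le]
    · have : g t - (χ t : ℂ) * g t = ((1 - χ t : ℝ) : ℂ) * g t := by
        push_cast; ring
      rw [this, norm_mul, Complex.norm_real]
      have h1 : |1 - χ t| ≤ 1 := by
        rw [abs_le]; constructor
        · have := hχ1 t; linarith
        · have := hχ0 t; linarith
      calc |1 - χ t| * ‖g t‖ ≤ 1 * ε :=
            mul_le_mul h1 (hsmall t h) (norm_nonneg _) zero_le_one
        _ = ε := one_mul _
  · intro t ht
    have hχt : χ t = 0 := by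
      rw [hχdef]
      apply max_eq_left
      exact le_trans (min_le_right _ _) (by linarith)
    rw [hg'app, hχt]
    simp

lemma tendsto_n_mul_pow_sub {q : ℝ} (h0 : 0 ≤ q) (h1 : q < 1) (A : ℕ) :
    Tendsto (fun n : ℕ => (n:ℝ) * q ^ (n - A)) atTop (𝓝 0) := by
  have h2 : Tendsto (fun m : ℕ => ((m:ℝ) + A) * q ^ m) atTop (𝓝 0) := by
    have ha := tendsto_self_mul_const_pow_of_lt_one h0 h1
    have hb := (tendsto_pow_atTop_nhds_zero_of_lt_one h0 h1).const_mul (A:ℝ)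
    have hab := ha.add hb
    rw [mul_zero, add_zero] at hab
    exact hab.congr fun m => by ring
  have h3 := h2.comp (tendsto_sub_atTop_nat A)
  apply h3.congr'
  filter_upwards [eventually_ge_atTop A] with n hn
  show (((n - A : ℕ):ℝ) + A) * q ^ (n - A) = (n:ℝ) * q ^ (n - A)
  rw [Nat.cast_sub hn]; ring

set_option maxHeartbeats 1000000 in
theorem inverse_cesaro_hyper_transitive_of_weight
    (w : ℝ → ℝ) (hw_cont : Continuous w) (hw_pos : ∀ t, 0 < w t)
    (hw_bdd : ∃ C, ∀ t, w t ≤ C)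
    (M δ K₁ K₂ : ℝ) (hM : 0 < M) (hδ : 0 < δ) (hK₁ : 0 < K₁) (hK₂ : 0 < K₂)
    (hMδ : 1 < M - δ)
    (hlow : ∀ t ≤ -K₁, 1 / M ≤ w t ∧ w t ≤ 1 / (M - δ))
    (hhigh : ∀ t ≥ K₂, w t = 1)
    (T S : C₀(ℝ, ℂ) →L[ℂ] C₀(ℝ, ℂ))
    (hT : ∀ (f : C₀(ℝ, ℂ)) (t : ℝ), T f t = (w t : ℂ) * f (t + 1))
    (hS : ∀ (f : C₀(ℝ, ℂ)) (t : ℝ), S f t = ((w (t - 1) : ℂ))⁻¹ * f (t - 1))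
    (hST : ∀ f, S (T f) = f) (hTS : ∀ f, T (S f) = f) :
    IsCesaroHyperTransitive S := by
  intro O₁ O₂ hO₁ hO₂ hne₁ hne₂
  obtain ⟨g₁, hg₁⟩ := hne₁
  obtain ⟨g₂, hg₂⟩ := hne₂
  obtain ⟨ε₁, hε₁, hball₁⟩ := Metric.isOpen_iff.mp hO₁ g₁ hg₁
  obtain ⟨ε₂, hε₂, hball₂⟩ := Metric.isOpen_iff.mp hO₂ g₂ hg₂
  obtain ⟨R₁, hR₁, g₁', happ₁, hsupp₁⟩ := exists_truncation g₁ (half_pos hε₁)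
  obtain ⟨R₂, hR₂, g₂', happ₂, hsupp₂⟩ := exists_truncation g₂ (half_pos hε₂)
  set R : ℝ := max R₁ R₂ with hRdef
  have hR : 0 < R := lt_of_lt_of_le hR₁ (le_max_left _ _)
  have hsupp₁' : ∀ t : ℝ, R ≤ |t| → g₁' t = 0 := fun t ht =>
    hsupp₁ t (le_trans (le_max_left _ _) ht)
  have hsupp₂' : ∀ t : ℝ, R ≤ |t| → g₂' t = 0 := fun t ht =>
    hsupp₂ t (le_trans (le_max_right _ _) ht)
  -- constants
  obtain ⟨C, hC⟩ := hw_bdd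
  set C' : ℝ := max C 1 with hC'def
  have hC'1 : (1:ℝ) ≤ C' := le_max_right _ _
  have hC' : ∀ t, w t ≤ C' := fun t => le_trans (hC t) (le_max_left _ _)
  set q : ℝ := 1 / (M - δ) with hqdef
  have hMδ0 : (0:ℝ) < M - δ := by linarith
  have hq0 : 0 < q := by positivity
  have hq1 : q < 1 := by
    rw [hqdef, div_lt_one hMδ0]; exact hMδ
  -- global lower bound for w
  obtain ⟨t₀, ht₀mem, ht₀min⟩ := isCompact_Icc.exists_isMinOn
    (s := Set.Icc (-K₁) K₂) ⟨0, by constructor <;> linarith⟩ hw_cont.continuousOn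
  set c : ℝ := min (1/M) (min 1 (w t₀)) with hcdef
  have hc0 : 0 < c := by
    apply lt_min (by positivity)
    exact lt_min one_pos (hw_pos t₀)
  have hc1 : c ≤ 1 := le_trans (min_le_right _ _) (min_le_left _ _)
  have hcle : ∀ t, c ≤ w t := by
    intro t
    rcases le_or_gt t (-K₁) with h | h
    · exact le_trans (min_le_left _ _) (hlow t h).1
    rcases le_or_gt K₂ t with h' | h'
    · rw [hhigh t h']
      exact hc1
    · have hmem : t ∈ Set.Icc (-K₁) K₂ := ⟨h.le, h'.le⟩
      exact le_trans (le_trans (min_le_right _ _) (min_le_right _ _))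
        (isMinOn_iff.mp ht₀min t hmem)
  set A : ℕ := ⌈R + K₁ + 1⌉₊ with hAdef
  set A' : ℕ := ⌈R + K₂ + 1⌉₊ with hA'def
  have hAle : R + K₁ + 1 ≤ (A:ℝ) := Nat.le_ceil _
  have hA'le : R + K₂ + 1 ≤ (A':ℝ) := Nat.le_ceil _
  -- formulas for powers
  have hSpow : ∀ (n : ℕ) (f : C₀(ℝ, ℂ)) (t : ℝ),
      (S ^ n) f t = (∏ i ∈ Finset.range n, (w (t - 1 - i) : ℂ))⁻¹ * f (t - n) := by
    intro n
    induction n with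
    | zero => intro f t; simp
    | succ n ih =>
      intro f t
      rw [pow_succ, ContinuousLinearMap.mul_apply, ih (S f) t, hS f (t - n),
        Finset.prod_range_succ, mul_inv]
      have e2 : t - 1 - (n:ℝ) = t - (n:ℝ) - 1 := by ring
      have e1 : t - (n:ℝ) - 1 = t - ((n + 1 : ℕ) : ℝ) := by push_cast; ring
      rw [e2, e1]
      ring
  have hTpow : ∀ (n : ℕ) (f : C₀(ℝ, ℂ)) (t : ℝ),
      (T ^ n) f t = (∏ i ∈ Finset.range n, (w (t + i) : ℂ)) * f (t + n) := by
    intro n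
    induction n with
    | zero => intro f t; simp
    | succ n ih =>
      intro f t
      rw [pow_succ, ContinuousLinearMap.mul_apply, ih (T f) t, hT f (t + n),
        Finset.prod_range_succ]
      have e1 : t + (n:ℝ) + 1 = t + ((n + 1 : ℕ) : ℝ) := by push_cast; ring
      rw [e1]
      ring
  have hSTpow : ∀ (n : ℕ) (g : C₀(ℝ, ℂ)), (S ^ n) ((T ^ n) g) = g := by
    intro n
    induction n with
    | zero => intro g; simp
    | succ n ih =>
      intro g
      rw [pow_succ' S, pow_succ T, ContinuousLinearMap.mul_apply,
        ContinuousLinearMap.mul_apply, ih (T g), hST]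
  -- norm bound for T^n g₂'
  have hTbound : ∀ n : ℕ, A ≤ n → ‖(T ^ n) g₂'‖ ≤ C' ^ A * q ^ (n - A) * ‖g₂'‖ := by
    intro n hn
    apply c0_norm_le _ (by positivity)
    intro t
    rw [hTpow n g₂' t, norm_mul]
    rcases le_or_gt R (|t + n|) with h | h
    · rw [hsupp₂' _ h]
      simp only [norm_zero, mul_zero]
      positivity
    · have ht : t + n < R := (abs_lt.mp h).2
      -- product bound
      have hprodcast : (∏ i ∈ Finset.range n, (w (t + i) : ℂ))
          = ((∏ i ∈ Finset.range n, w (t + i) : ℝ) : ℂ) := by push_cast; ring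
      have hprodnn : 0 ≤ ∏ i ∈ Finset.range n, w (t + i) :=
        Finset.prod_nonneg fun i _ => (hw_pos _).le
      have hkey : (∏ i ∈ Finset.range n, w (t + i)) ≤ q ^ (n - A) * C' ^ A := by
        rw [← Finset.prod_range_mul_prod_Ico _ (Nat.sub_le n A)]
        have h1 : (∏ i ∈ Finset.range (n - A), w (t + i)) ≤ q ^ (n - A) := by
          calc (∏ i ∈ Finset.range (n - A), w (t + i))
              ≤ ∏ _i ∈ Finset.range (n - A), q := by
                apply Finset.prod_le_prod (fun i _ => (hw_pos _).le)
                intro i hi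
                rw [Finset.mem_range] at hi
                have hi' : (i:ℝ) + 1 ≤ (n:ℝ) - A := by
                  have hle : i + 1 ≤ n - A := hi
                  have h2 := (Nat.cast_le (α := ℝ)).mpr hle
                  rwa [Nat.cast_add, Nat.cast_one, Nat.cast_sub hn] at h2
                have hti : t + i ≤ -K₁ := by
                  have hA2 : (A:ℝ) ≥ R + K₁ + 1 := hAle
                  nlinarith
                exact (hlow _ hti).2
            _ = q ^ (n - A) := by rw [Finset.prod_const, Finset.card_range]
        have h2 : (∏ i ∈ Finset.Ico (n - A) n, w (t + i)) ≤ C' ^ A := by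
          calc (∏ i ∈ Finset.Ico (n - A) n, w (t + i))
              ≤ ∏ _i ∈ Finset.Ico (n - A) n, C' :=
                Finset.prod_le_prod (fun i _ => (hw_pos _).le) (fun i _ => hC' _)
            _ = C' ^ A := by
                rw [Finset.prod_const, Nat.card_Ico, Nat.sub_sub_self hn]
        exact mul_le_mul h1 h2 (Finset.prod_nonneg fun i _ => (hw_pos _).le)
          (by positivity)
      rw [hprodcast, Complex.norm_real, Real.norm_eq_abs, abs_of_nonneg hprodnn]
      refine le_trans (mul_le_mul hkey (c0_norm_apply_le _ _) (norm_nonneg _)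
        (by positivity)) (le_of_eq (by ring))
  -- norm bound for S^n g₁'
  have hSbound : ∀ n : ℕ, A' ≤ n → ‖(S ^ n) g₁'‖ ≤ c⁻¹ ^ A' * ‖g₁'‖ := by
    intro n hn
    apply c0_norm_le _ (by positivity)
    intro t
    rw [hSpow n g₁' t, norm_mul]
    rcases le_or_gt R (|t - n|) with h | h
    · rw [hsupp₁' _ h]
      simp only [norm_zero, mul_zero]
      positivity
    · have ht : -(R) < t - n := (abs_lt.mp h).1
      have hprodcast : (∏ i ∈ Finset.range n, (w (t - 1 - i) : ℂ))
          = ((∏ i ∈ Finset.range n, w (t - 1 - i) : ℝ) : ℂ) := by push_cast; ring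
      have hprodpos : 0 < ∏ i ∈ Finset.range n, w (t - 1 - i) :=
        Finset.prod_pos fun i _ => hw_pos _
      have hkey : c ^ A' ≤ ∏ i ∈ Finset.range n, w (t - 1 - i) := by
        rw [← Finset.prod_range_mul_prod_Ico _ (Nat.sub_le n A')]
        have h1 : (∏ i ∈ Finset.range (n - A'), w (t - 1 - i)) = 1 := by
          apply Finset.prod_eq_one
          intro i hi
          rw [Finset.mem_range] at hi
          have hi' : (i:ℝ) + 1 ≤ (n:ℝ) - A' := by
            have hle : i + 1 ≤ n - A' := hi
            have h2 := (Nat.cast_le (α := ℝ)).mpr hle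
            rwa [Nat.cast_add, Nat.cast_one, Nat.cast_sub hn] at h2
          apply hhigh
          have hA'' : (A':ℝ) ≥ R + K₂ + 1 := hA'le
          nlinarith
        have h2 : c ^ A' ≤ ∏ i ∈ Finset.Ico (n - A') n, w (t - 1 - i) := by
          calc c ^ A' = ∏ _i ∈ Finset.Ico (n - A') n, c := by
                rw [Finset.prod_const, Nat.card_Ico, Nat.sub_sub_self hn]
            _ ≤ ∏ i ∈ Finset.Ico (n - A') n, w (t - 1 - i) :=
                Finset.prod_le_prod (fun i _ => hc0.le) (fun i _ => hcle _)
        rw [h1, one_mul]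
        exact h2
      rw [hprodcast, norm_inv, Complex.norm_real, Real.norm_eq_abs, abs_of_nonneg hprodpos.le]
      have hinv : (∏ i ∈ Finset.range n, w (t - 1 - i))⁻¹ ≤ c⁻¹ ^ A' := by
        rw [inv_pow]
        exact inv_anti₀ (by positivity) hkey
      exact mul_le_mul hinv (c0_norm_apply_le _ _) (norm_nonneg _) (by positivity)
  -- limits
  have hlim1 : Tendsto (fun n : ℕ => (n:ℝ) * (C' ^ A * q ^ (n - A) * ‖g₂'‖))
      atTop (𝓝 0) := by
    have := (tendsto_n_mul_pow_sub hq0.le hq1 A).const_mul (C' ^ A * ‖g₂'‖)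
    rw [mul_zero] at this
    exact this.congr fun n => by ring
  have hlim2 : Tendsto (fun n : ℕ => (n:ℝ)⁻¹ * (c⁻¹ ^ A' * ‖g₁'‖)) atTop (𝓝 0) := by
    have := tendsto_one_div_atTop_nhds_zero_nat.const_mul (c⁻¹ ^ A' * ‖g₁'‖)
    rw [mul_zero] at this
    exact this.congr fun n => by rw [one_div]; ring
  have hev : ∀ᶠ n : ℕ in atTop,
      (n:ℝ) * (C' ^ A * q ^ (n - A) * ‖g₂'‖) < ε₁ / 2 ∧
      (n:ℝ)⁻¹ * (c⁻¹ ^ A' * ‖g₁'‖) < ε₂ / 2 ∧ A ≤ n ∧ A' ≤ n ∧ 1 ≤ n := by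
    filter_upwards [hlim1.eventually (gt_mem_nhds (half_pos hε₁)),
      hlim2.eventually (gt_mem_nhds (half_pos hε₂)),
      eventually_ge_atTop A, eventually_ge_atTop A', eventually_ge_atTop 1]
      with n h1 h2 h3 h4 h5
    exact ⟨h1, h2, h3, h4, h5⟩
  -- key existence statement
  have key : ∀ N : ℕ, ∃ n, N < n ∧ ∃ f ∈ O₁, ((n:ℂ))⁻¹ • (S ^ n) f ∈ O₂ := by
    intro N
    obtain ⟨n, hnN, hb1, hb2, hnA, hnA', hn1⟩ := ((eventually_gt_atTop N).and hev).exists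
    have hnz : (n:ℂ) ≠ 0 := Nat.cast_ne_zero.mpr (by omega)
    refine ⟨n, hnN, g₁' + (n:ℂ) • (T ^ n) g₂', ?_, ?_⟩
    · apply hball₁
      rw [Metric.mem_ball, dist_eq_norm]
      have heq : g₁' + (n:ℂ) • (T ^ n) g₂' - g₁ = (n:ℂ) • (T ^ n) g₂' + (g₁' - g₁) := by
        abel
      rw [heq]
      have h1 : ‖(n:ℂ) • (T ^ n) g₂'‖ ≤ (n:ℝ) * (C' ^ A * q ^ (n - A) * ‖g₂'‖) := by
        have hns := norm_smul (n:ℂ) ((T ^ n) g₂')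
        rw [Complex.norm_natCast] at hns
        rw [hns]
        exact mul_le_mul_of_nonneg_left (hTbound n hnA) (Nat.cast_nonneg n)
      have h2 : ‖g₁' - g₁‖ ≤ ε₁ / 2 := by rw [norm_sub_rev]; exact happ₁
      have h3 : ‖(n:ℂ) • (T ^ n) g₂' + (g₁' - g₁)‖
          ≤ ‖(n:ℂ) • (T ^ n) g₂'‖ + ‖g₁' - g₁‖ := norm_add_le _ _
      linarith [lt_of_le_of_lt h1 hb1]
    · apply hball₂
      rw [Metric.mem_ball, dist_eq_norm]
      have heq : ((n:ℂ))⁻¹ • (S ^ n) (g₁' + (n:ℂ) • (T ^ n) g₂')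
          = ((n:ℂ))⁻¹ • (S ^ n) g₁' + g₂' := by
        rw [map_add, map_smul,
          smul_add ((n:ℂ)⁻¹) ((S ^ n) g₁') ((n:ℂ) • (S ^ n) ((T ^ n) g₂')),
          smul_smul ((n:ℂ)⁻¹) (n:ℂ) ((S ^ n) ((T ^ n) g₂')),
          inv_mul_cancel₀ hnz, one_smul, hSTpow n g₂']
      rw [heq]
      have heq2 : ((n:ℂ))⁻¹ • (S ^ n) g₁' + g₂' - g₂
          = ((n:ℂ))⁻¹ • (S ^ n) g₁' + (g₂' - g₂) := by abel
      rw [heq2]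
      have h1 : ‖((n:ℂ))⁻¹ • (S ^ n) g₁'‖ ≤ (n:ℝ)⁻¹ * (c⁻¹ ^ A' * ‖g₁'‖) := by
        have hns := norm_smul ((n:ℂ))⁻¹ ((S ^ n) g₁')
        rw [norm_inv, Complex.norm_natCast] at hns
        rw [hns]
        exact mul_le_mul_of_nonneg_left (hSbound n hnA') (by positivity)
      have h2 : ‖g₂' - g₂‖ ≤ ε₂ / 2 := by rw [norm_sub_rev]; exact happ₂
      have h3 : ‖((n:ℂ))⁻¹ • (S ^ n) g₁' + (g₂' - g₂)‖
          ≤ ‖((n:ℂ))⁻¹ • (S ^ n) g₁'‖ + ‖g₂' - g₂‖ := norm_add_le _ _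
      linarith [lt_of_le_of_lt h1 hb2]
  -- build the strictly monotone sequence
  choose φ hφ₁ hφ₂ using key
  set n : ℕ → ℕ := fun k => Nat.rec (φ 0) (fun _ ih => φ ih) k with hn
  have hsucc : ∀ k, n (k + 1) = φ (n k) := fun k => rfl
  have hmono : StrictMono n := strictMono_nat_of_lt_succ fun k => by
    rw [hsucc]; exact hφ₁ (n k)
  have h1le : ∀ k, 1 ≤ n k := by
    intro k
    have h0 : 0 < n 0 := hφ₁ 0
    exact le_trans h0 (hmono.monotone (Nat.zero_le k))
  refine ⟨n, hmono, h1le, ?_⟩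
  intro k
  cases k with
  | zero => exact hφ₂ 0
  | succ k => exact hφ₂ (n k)
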